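/- arXiv:1404.2618 — 5 statements merged into one kernel-verified Lean document; each statement's English description precedes it below -/
import Mathlib

section
/- In the sylvester monoid S (presented over the ordered alphabet {1 < 2 < 3 < ...} by relations cavb = acvb for all letters a ≤ b < c and all words v), any two words with the same content represent ∼p*-conjugate elements. -/
/-!
Since `∼p*` is an equivalence relation, it suffices to connect every word to its sorted
rearrangement. Rotations are `∼p`-steps, so an adjacent inversion `c d` (`d < c`) may be swapped
as soon as some other letter `b` with `d ≤ b < c` occurs anywhere in the word: rotate `b` behind
the pair and apply `c d v b = d c v b`. Sort by bringing the smallest remaining letter `d` to the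
end of the sorted prefix `s`, swapping it leftwards. If no witness is available, all letters
between `s` and `d` exceed `d`; the relations `x t v d = t x v d` (`x ≤ d < t`) then let `s`
slide past them, and a rotation puts `d` directly after `s`.

Only the sylvester relations among the letters are used, so the argument runs in any monoid.
-/

/-- The defining relations of the sylvester monoid over the alphabet ℕ
(order-isomorphic to {1 < 2 < 3 < ⋯}): `(cavb, acvb)` for `a ≤ b < c`. -/
def SylvesterRel : FreeMonoid ℕ → FreeMonoid ℕ → Prop := fun u v =>
  ∃ (a b c : ℕ) (w : FreeMonoid ℕ), a ≤ b ∧ b < c ∧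
    u = FreeMonoid.of c * FreeMonoid.of a * w * FreeMonoid.of b ∧
    v = FreeMonoid.of a * FreeMonoid.of c * w * FreeMonoid.of b

open Relation

def PConj {M : Type*} [Monoid M] (x y : M) : Prop := ∃ u v, x = u * v ∧ y = v * u

namespace PConj

variable {M : Type*} [Monoid M]

theorem mul_comm (x y : M) : PConj (x * y) (y * x) := ⟨x, y, rfl, rfl⟩

instance : Std.Refl (PConj (M := M)) where
  refl x := by simpa using mul_comm x 1

instance : Std.Symm (PConj (M := M)) where
  symm _ _ := fun ⟨u, v, hx, hy⟩ => ⟨v, u, hy, hx⟩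

end PConj

section Sylvester

variable {α M : Type*} [Monoid M]

theorem transGen_pconj_prod_append_comm (f : α → M) (X Y : List α) :
    TransGen PConj ((X ++ Y).map f).prod ((Y ++ X).map f).prod :=
  .single <| by simpa using PConj.mul_comm (X.map f).prod (Y.map f).prod

variable [LinearOrder α]

def SatisfiesSylvesterRel (f : α → M) : Prop :=
  ∀ ⦃a b c : α⦄, a ≤ b → b < c → ∀ v : M, f c * f a * v * f b = f a * f c * v * f b

variable {f : α → M}

theorem SatisfiesSylvesterRel.swap_mul_of_mem (hf : SatisfiesSylvesterRel f) {b c d : α}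
    {B : List α} (hb : b ∈ B) (hdb : d ≤ b) (hbc : b < c) :
    ((c :: d :: B).map f).prod = ((d :: c :: B).map f).prod := by
  obtain ⟨B₁, B₂, rfl⟩ := List.append_of_mem hb
  have h := congrArg (· * (B₂.map f).prod) (hf hdb hbc (B₁.map f).prod)
  simpa [mul_assoc] using h

theorem SatisfiesSylvesterRel.transGen_pconj_swap (hf : SatisfiesSylvesterRel f)
    {A B : List α} {b c d : α} (hb : b ∈ A ++ B) (hdb : d ≤ b) (hbc : b < c) :
    TransGen PConj ((A ++ c :: d :: B).map f).prod ((A ++ d :: c :: B).map f).prod :=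
  -- rotating `A` to the back puts the witness `b` behind the pair `c d`
  calc TransGen PConj _ ((c :: d :: B ++ A).map f).prod := transGen_pconj_prod_append_comm f _ _
    _ = ((d :: c :: B ++ A).map f).prod :=
      hf.swap_mul_of_mem (by simpa [or_comm] using hb) hdb hbc
    TransGen PConj _ _ := transGen_pconj_prod_append_comm f _ _

theorem SatisfiesSylvesterRel.mul_comm_of_forall_le_lt (hf : SatisfiesSylvesterRel f) {d : α}
    {s T : List α} (hs : ∀ x ∈ s, x ≤ d) (hT : ∀ t ∈ T, d < t) (v : M) :
    (s.map f).prod * (T.map f).prod * v * f d = (T.map f).prod * (s.map f).prod * v * f d := by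
  have comm_letter : ∀ x, x ≤ d → ∀ v, f x * (T.map f).prod * v * f d =
      (T.map f).prod * f x * v * f d := by
    intro x hx
    induction T with
    | nil => simp
    | cons t T ih =>
      intro v
      have ht := hf hx (hT t (by simp)) ((T.map f).prod * v)
      have ih := ih (fun t h => hT t (by simp [h])) v
      simp only [List.map_cons, List.prod_cons, mul_assoc] at ht ih ⊢
      rw [← ht, ih]
  induction s generalizing v with
  | nil => simp
  | cons x s ih =>
    have ih := ih (fun x h => hs x (by simp [h])) v
    have hx := comm_letter x (hs x (by simp)) ((s.map f).prod * v)
    simp only [List.map_cons, List.prod_cons, mul_assoc] at ih hx ⊢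
    rw [ih, ← hx]

theorem SatisfiesSylvesterRel.transGen_pconj_extract_of_forall_lt (hf : SatisfiesSylvesterRel f)
    {d : α} {s P : List α} (hs : ∀ x ∈ s, x ≤ d) (hP : ∀ x ∈ P, d < x) (Q : List α) :
    TransGen PConj ((s ++ P ++ d :: Q).map f).prod ((s ++ d :: (Q ++ P)).map f).prod := by
  have hcomm : ((s ++ P ++ d :: Q).map f).prod = ((P ++ (s ++ d :: Q)).map f).prod := by
    simpa [mul_assoc] using
      congrArg (· * (Q.map f).prod) (hf.mul_comm_of_forall_le_lt hs hP 1)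
  rw [hcomm]
  simpa using transGen_pconj_prod_append_comm f P (s ++ d :: Q)

theorem SatisfiesSylvesterRel.exists_perm_transGen_pconj_extract (hf : SatisfiesSylvesterRel f)
    {d : α} {s : List α} (hs : ∀ x ∈ s, x ≤ d) (P : List α) (hP : ∀ x ∈ P, d ≤ x)
    (Q : List α) : ∃ R : List α, R.Perm (P ++ Q) ∧
      TransGen PConj ((s ++ P ++ d :: Q).map f).prod ((s ++ d :: R).map f).prod := by
  induction P using List.reverseRecOn generalizing Q with
  | nil => exact ⟨Q, .refl _, by simpa using refl_of (TransGen PConj) _⟩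
  | append_singleton P c ih =>
    have hP' : ∀ x ∈ P, d ≤ x := fun x hx => hP x (by simp [hx])
    rcases (hP c (by simp)).eq_or_lt with rfl | hdc
    · obtain ⟨R, hR, h⟩ := ih hP' (d :: Q)
      exact ⟨R, hR.trans (by simp), by simpa using h⟩
    by_cases hw : ∃ b ∈ s ++ P ++ Q, d ≤ b ∧ b < c
    · obtain ⟨b, hb, hdb, hbc⟩ := hw
      obtain ⟨R, hR, h⟩ := ih hP' (c :: Q)
      refine ⟨R, hR.trans (by simp), ?_⟩
      calc TransGen PConj _ ((s ++ P ++ d :: c :: Q).map f).prod := by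
            simpa using hf.transGen_pconj_swap hb hdb hbc
        TransGen PConj _ _ := h
    · push Not at hw
      have hlt : ∀ x ∈ P ++ [c], d < x := by
        simp only [List.mem_append, List.mem_singleton]
        rintro x (hx | rfl)
        exacts [hdc.trans_le (hw x (by simp [hx]) (hP' x hx)), hdc]
      exact ⟨Q ++ (P ++ [c]), List.perm_append_comm,
        hf.transGen_pconj_extract_of_forall_lt hs hlt Q⟩

theorem SatisfiesSylvesterRel.transGen_pconj_of_perm_of_pairwise (hf : SatisfiesSylvesterRel f)
    {z' : List α} (hz' : z'.Pairwise (· ≤ ·)) : ∀ {s z : List α}, z.Perm z' →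
      (∀ a ∈ s, ∀ b ∈ z', a ≤ b) → TransGen PConj ((s ++ z).map f).prod ((s ++ z').map f).prod := by
  induction hz' with
  | nil =>
    intro s z hz _
    rw [hz.eq_nil]
    exact refl_of _ _
  | @cons d z' hd _ ih =>
    intro s z hz hs
    obtain ⟨P, Q, rfl⟩ := List.append_of_mem (hz.mem_iff.mpr List.mem_cons_self)
    have hge : ∀ x ∈ P ++ d :: Q, d ≤ x := fun x hx => by
      rcases List.mem_cons.mp (hz.subset hx) with rfl | h
      exacts [le_rfl, hd x h]
    obtain ⟨R, hR, h⟩ := hf.exists_perm_transGen_pconj_extract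
      (fun x hx => hs x hx d List.mem_cons_self) P (fun x hx => hge x (by simp [hx])) Q
    have hRz : R.Perm z' := hR.trans (List.perm_middle.symm.trans hz).cons_inv
    have hs' : ∀ a ∈ s ++ [d], ∀ b ∈ z', a ≤ b := by
      simp only [List.mem_append, List.mem_singleton]
      rintro a (ha | rfl) b hb
      exacts [hs a ha b (List.mem_cons_of_mem _ hb), hd b hb]
    calc TransGen PConj _ ((s ++ d :: R).map f).prod := by simpa using h
      TransGen PConj _ _ := by simpa using ih hRz hs'

theorem SatisfiesSylvesterRel.transGen_pconj_of_perm (hf : SatisfiesSylvesterRel f)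
    {l l' : List α} (h : l.Perm l') : TransGen PConj (l.map f).prod (l'.map f).prod := by
  have hsort := List.pairwise_insertionSort (· ≤ ·) l'
  have hl' := List.perm_insertionSort (· ≤ ·) l'
  exact (hf.transGen_pconj_of_perm_of_pairwise hsort (s := []) (h.trans hl'.symm) (by simp)).trans
    (symm_of _ (hf.transGen_pconj_of_perm_of_pairwise hsort (s := []) hl'.symm (by simp)))

end Sylvester

theorem FreeMonoid.hom_eq_prod_map_of {α M : Type*} [Monoid M] (g : FreeMonoid α →* M)
    (w : FreeMonoid α) : g w = (w.toList.map fun a => g (of a)).prod := by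
  rw [← lift_apply]
  exact DFunLike.congr_fun (lift_restrict g).symm w

theorem satisfiesSylvesterRel_mk'_of :
    SatisfiesSylvesterRel fun a => (conGen SylvesterRel).mk' (FreeMonoid.of a) := by
  intro a b c hab hbc v
  obtain ⟨w, rfl⟩ := (conGen SylvesterRel).mk'_surjective v
  simp only [← map_mul]
  exact (Con.eq _).mpr (ConGen.Rel.of _ _ ⟨a, b, c, w, hab, hbc, rfl, rfl⟩)

theorem sylvester_same_content_pstar (w w' : FreeMonoid ℕ)
    (hc : ∀ a : ℕ, w.toList.count a = w'.toList.count a) :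
    Relation.TransGen
      (fun x y : (conGen SylvesterRel).Quotient => ∃ u v, x = u * v ∧ y = v * u)
      ((conGen SylvesterRel).mk' w) ((conGen SylvesterRel).mk' w') := by
  rw [FreeMonoid.hom_eq_prod_map_of _ w, FreeMonoid.hom_eq_prod_map_of _ w']
  exact satisfiesSylvesterRel_mk'_of.transGen_pconj_of_perm (List.perm_iff_count.mpr hc)
end

section
/- In the sylvester monoid S, two elements are o-conjugate if and only if they have the same content; moreover, the relations ∼o and ∼p* coincide on S. -/
open Relation

def IsPConj {M : Type*} [Monoid M] (x y : M) : Prop := ∃ u v, x = u * v ∧ y = v * u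

local infix:50 " ∼ₚ* " => TransGen IsPConj

section Monoid

variable {M : Type*} [Monoid M]

instance : Std.Refl (IsPConj (M := M)) where
  refl x := ⟨x, 1, by simp, by simp⟩

instance : Std.Symm (IsPConj (M := M)) where
  symm _ _ := fun ⟨u, v, hx, hy⟩ => ⟨v, u, hy, hx⟩

theorem transGen_isPConj_mul_comm (u v : M) : u * v ∼ₚ* v * u :=
  .single ⟨u, v, rfl, rfl⟩

theorem transGen_isPConj_of_eq {x y : M} (h : x = y) : x ∼ₚ* y := h ▸ refl x

theorem exists_mul_eq_mul_of_transGen_isPConj {x y : M} (h : x ∼ₚ* y) :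
    ∃ g h, x * g = g * y ∧ h * x = y * h := by
  induction h with
  | single h =>
    obtain ⟨u, v, rfl, rfl⟩ := h
    exact ⟨u, v, mul_assoc .., (mul_assoc ..).symm⟩
  | tail _ h ih =>
    obtain ⟨u, v, rfl, rfl⟩ := h
    obtain ⟨g, k, hg, hk⟩ := ih
    exact ⟨g * u, v * k, by rw [← mul_assoc, hg, mul_assoc, mul_assoc, mul_assoc],
      by rw [mul_assoc, hk, ← mul_assoc, ← mul_assoc, ← mul_assoc]⟩

theorem map_eq_of_mul_eq_mul {N : Type*} [CancelCommMonoid N] (f : M →* N) {x y g : M}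
    (h : x * g = g * y) : f x = f y := by
  have := congrArg f h
  rwa [map_mul, map_mul, mul_comm (f g), mul_left_inj] at this

variable {N : Type*} [CommMonoid N] (f : M →* N)

theorem IsPConj.map_eq {x y : M} (h : IsPConj x y) : f x = f y := by
  obtain ⟨u, v, rfl, rfl⟩ := h
  rw [map_mul, map_mul, mul_comm]

theorem map_eq_of_transGen_isPConj {x y : M} (h : x ∼ₚ* y) : f x = f y := by
  induction h with
  | single h => exact h.map_eq f
  | tail _ h ih => exact ih.trans (h.map_eq f)

end Monoid

theorem List.exists_mem_forall_le_of_ne_nil {α : Type*} [LinearOrder α] {l : List α}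
    (hl : l ≠ []) :
    ∃ c ∈ l, ∀ a ∈ l, a ≤ c := by
  obtain ⟨c, hc⟩ := Option.isSome_iff_exists.1 (List.isSome_max?_of_ne_nil hl)
  exact ⟨c, List.max?_eq_some_iff.1 hc⟩

abbrev Sylvester := (conGen SylvesterRel).Quotient

namespace Sylvester

def ofList (l : List ℕ) : Sylvester := (conGen SylvesterRel).mk' (FreeMonoid.ofList l)

theorem ofList_append (l₁ l₂ : List ℕ) : ofList (l₁ ++ l₂) = ofList l₁ * ofList l₂ :=
  map_mul _ _ _

theorem ofList_toList (w : FreeMonoid ℕ) : ofList w.toList = (conGen SylvesterRel).mk' w := by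
  simp [ofList]

theorem exists_ofList_eq (x : Sylvester) : ∃ l, ofList l = x := by
  obtain ⟨w, rfl⟩ := (conGen SylvesterRel).mk'_surjective x
  exact ⟨w.toList, ofList_toList w⟩

def content : Sylvester →* Multiplicative (Multiset ℕ) :=
  (conGen SylvesterRel).lift (FreeMonoid.lift fun a => .ofAdd {a}) <|
    Con.conGen_le.2 fun _ _ ⟨a, _, c, _, _, _, hu, hv⟩ => by
      rw [Con.ker_rel, hu, hv]
      simp only [map_mul, mul_comm (FreeMonoid.lift _ (FreeMonoid.of c))]

theorem content_ofList (l : List ℕ) : content (ofList l) = .ofAdd ↑l := by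
  induction l with
  | nil => rfl
  | cons a l ih =>
    rw [← List.singleton_append, ofList_append, map_mul, ih]
    rfl

theorem ofList_swap {a b c : ℕ} (hab : a ≤ b) (hbc : b < c) (p v q : List ℕ) :
    ofList (p ++ c :: a :: (v ++ b :: q)) = ofList (p ++ a :: c :: (v ++ b :: q)) := by
  have h : ofList (c :: a :: (v ++ [b])) = ofList (a :: c :: (v ++ [b])) :=
    (Con.eq _).2 (ConGen.Rel.of _ _ ⟨a, b, c, FreeMonoid.ofList v, hab, hbc, rfl, rfl⟩)
  calc ofList (p ++ c :: a :: (v ++ b :: q))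
      = ofList p * ofList (c :: a :: (v ++ [b])) * ofList q := by simp [← ofList_append]
    _ = ofList p * ofList (a :: c :: (v ++ [b])) * ofList q := by rw [h]
    _ = ofList (p ++ a :: c :: (v ++ b :: q)) := by simp [← ofList_append]

theorem transGen_ofList_append_comm (l₁ l₂ : List ℕ) :
    ofList (l₁ ++ l₂) ∼ₚ* ofList (l₂ ++ l₁) := by
  simpa only [ofList_append] using transGen_isPConj_mul_comm _ _

theorem transGen_ofList_swap {a b c : ℕ} {p q : List ℕ} (hb : b ∈ p ++ q) (hab : a ≤ b)
    (hbc : b < c) : ofList (p ++ c :: a :: q) ∼ₚ* ofList (p ++ a :: c :: q) := by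
  rcases List.mem_append.1 hb with hp | hq
  · -- a cyclic shift moves the witness `b` behind the pair `c a`
    obtain ⟨p₁, p₂, rfl⟩ := List.append_of_mem hp
    calc ofList (p₁ ++ b :: p₂ ++ c :: a :: q)
        ∼ₚ* ofList (c :: a :: (q ++ p₁ ++ b :: p₂)) := by
          simpa using transGen_ofList_append_comm (p₁ ++ b :: p₂) (c :: a :: q)
      _ = ofList (a :: c :: (q ++ p₁ ++ b :: p₂)) := by
          simpa using ofList_swap hab hbc [] (q ++ p₁) p₂
      _ ∼ₚ* ofList (p₁ ++ b :: p₂ ++ a :: c :: q) := by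
          simpa using transGen_ofList_append_comm (a :: c :: q) (p₁ ++ b :: p₂)
  · obtain ⟨q₁, q₂, rfl⟩ := List.append_of_mem hq
    exact transGen_isPConj_of_eq (ofList_swap hab hbc p q₁ q₂)

theorem transGen_ofList_shift_letter {b c : ℕ} (hbc : b < c) {v : List ℕ}
    (hv : ∀ a ∈ v, a ≤ b) {p q : List ℕ} (hb : b ∈ p ++ q) :
    ofList (p ++ c :: (v ++ q)) ∼ₚ* ofList (p ++ v ++ c :: q) := by
  induction v generalizing p with
  | nil => simpa using refl _
  | cons a v ih =>
    calc ofList (p ++ c :: (a :: v ++ q))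
        ∼ₚ* ofList (p ++ a :: c :: (v ++ q)) :=
          transGen_ofList_swap (by simp at hb ⊢; tauto) (hv a (by simp)) hbc
      _ = ofList (p ++ [a] ++ c :: (v ++ q)) := by simp
      _ ∼ₚ* ofList (p ++ [a] ++ v ++ c :: q) :=
          ih (fun a ha => hv a (by simp [ha])) (by simp at hb ⊢; tauto)
      _ = ofList (p ++ (a :: v) ++ c :: q) := by simp

theorem transGen_ofList_shift_replicate {b c : ℕ} (hbc : b < c) {v : List ℕ}
    (hv : ∀ a ∈ v, a ≤ b) (M : ℕ) {p q : List ℕ} (hb : b ∈ p ++ q) :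
    ofList (p ++ List.replicate M c ++ v ++ q) ∼ₚ*
      ofList (p ++ v ++ List.replicate M c ++ q) := by
  induction M generalizing q with
  | zero => simpa using refl _
  | succ M ih =>
    calc ofList (p ++ List.replicate (M + 1) c ++ v ++ q)
        = ofList (p ++ List.replicate M c ++ c :: (v ++ q)) := by simp [List.replicate_succ']
      _ ∼ₚ* ofList (p ++ List.replicate M c ++ v ++ c :: q) :=
          transGen_ofList_shift_letter hbc hv (by simp at hb ⊢; tauto)
      _ ∼ₚ* ofList (p ++ v ++ List.replicate M c ++ c :: q) := ih (by simp at hb ⊢; tauto)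
      _ = ofList (p ++ v ++ List.replicate (M + 1) c ++ q) := by simp [List.replicate_succ']

theorem transGen_ofList_gather {c y : ℕ} (hyc : y < c) {t p : List ℕ} (hy : y ∈ p)
    (ht : ∀ x ∈ t, x = c ∨ x ≤ y) :
    ofList (p ++ t) ∼ₚ* ofList (p ++ t.filter (· ≠ c) ++ List.replicate (t.count c) c) := by
  induction t generalizing p with
  | nil => simpa using refl _
  | cons x t ih =>
    have ih' := ih (p := p ++ [x]) (by simp [hy]) (fun z hz => ht z (by simp [hz]))
    by_cases hx : x = c
    · subst hx
      have hF : ∀ a ∈ t.filter (· ≠ x), a ≤ y := fun a ha => by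
        simp only [List.mem_filter, decide_eq_true_eq] at ha
        exact (ht a (by simp [ha.1])).resolve_left ha.2
      calc ofList (p ++ x :: t) = ofList (p ++ [x] ++ t) := by simp
        _ ∼ₚ* ofList (p ++ List.replicate 1 x ++ t.filter (· ≠ x) ++
            List.replicate (t.count x) x) := by
          simpa using ih'
        _ ∼ₚ* ofList (p ++ t.filter (· ≠ x) ++ List.replicate 1 x ++
            List.replicate (t.count x) x) :=
          transGen_ofList_shift_replicate hyc hF 1 (by simp [hy])
        _ = _ := by simp [List.replicate_succ]
    · simpa [hx] using ih'

theorem exists_perm_transGen_ofList_gather {W : List ℕ} {c : ℕ} (hc : ∀ a ∈ W, a ≤ c) :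
    ∃ Z, Z.Perm (W.filter (· ≠ c)) ∧
      ofList W ∼ₚ* ofList (Z ++ List.replicate (W.count c) c) := by
  by_cases hF : W.filter (· ≠ c) = []
  · have hW : ∀ a ∈ W, a = c := by simpa [List.filter_eq_nil_iff] using hF
    refine ⟨[], hF ▸ .nil, transGen_isPConj_of_eq (congrArg ofList ?_)⟩
    rw [List.nil_append, List.count_eq_length.2 fun a ha => (hW a ha).symm]
    exact List.eq_replicate_iff.2 ⟨rfl, hW⟩
  obtain ⟨y, hyF, hy⟩ := List.exists_mem_forall_le_of_ne_nil hF
  simp only [List.mem_filter, decide_eq_true_eq] at hyF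
  obtain ⟨P, S, rfl⟩ := List.append_of_mem hyF.1
  have hperm : (P ++ y :: S).Perm ([y] ++ (S ++ P)) :=
    List.perm_middle.trans (List.perm_append_comm.cons y)
  refine ⟨y :: (S ++ P).filter (· ≠ c), ?_, ?_⟩
  · simpa [hyF.2] using (hperm.filter (· ≠ c)).symm
  · have hcount : (P ++ y :: S).count c = (S ++ P).count c := by
      simp [hperm.count_eq, hyF.2]
    rw [hcount]
    calc ofList (P ++ y :: S) ∼ₚ* ofList ([y] ++ (S ++ P)) := by
          simpa using transGen_ofList_append_comm P (y :: S)
      _ ∼ₚ* _ := transGen_ofList_gather ((hc y hyF.1).lt_of_ne hyF.2) (by simp) fun x hx => by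
          have hxW : x ∈ P ++ y :: S := by simp at hx ⊢; tauto
          exact or_iff_not_imp_left.2 fun hxc =>
            hy x (List.mem_filter.2 ⟨hxW, decide_eq_true hxc⟩)
      _ = _ := by simp

theorem transGen_ofList_append_replicate_of_mem {u v : List ℕ} {b c : ℕ} (hb : b ∈ u)
    (hbc : b < c) (hv : ∀ a ∈ v, a ≤ b) (M : ℕ) :
    ofList (u ++ v ++ List.replicate M c) ∼ₚ* ofList (v ++ u ++ List.replicate M c) :=
  calc ofList (u ++ v ++ List.replicate M c) ∼ₚ* ofList (u ++ List.replicate M c ++ v) :=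
        symm (by simpa using
          transGen_ofList_shift_replicate hbc hv M (p := u) (q := []) (by simp [hb]))
    _ ∼ₚ* ofList (v ++ u ++ List.replicate M c) := by
        simpa using transGen_ofList_append_comm (u ++ List.replicate M c) v

theorem transGen_ofList_append_replicate {u v : List ℕ} {c : ℕ} (hu : ∀ a ∈ u, a < c)
    (hv : ∀ a ∈ v, a < c) (M : ℕ) :
    ofList (u ++ v ++ List.replicate M c) ∼ₚ* ofList (v ++ u ++ List.replicate M c) := by
  rcases eq_or_ne (u ++ v) [] with huv | huv
  · obtain ⟨rfl, rfl⟩ := List.append_eq_nil_iff.1 huv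
    exact refl _
  obtain ⟨b, hb, hmax⟩ := List.exists_mem_forall_le_of_ne_nil huv
  rcases List.mem_append.1 hb with hbu | hbv
  · exact transGen_ofList_append_replicate_of_mem hbu (hu b hbu)
      (fun a ha => hmax a (by simp [ha])) M
  · exact symm (transGen_ofList_append_replicate_of_mem hbv (hv b hbv)
      (fun a ha => hmax a (by simp [ha])) M)

theorem transGen_mul_ofList_replicate_of_isPConj {x y : Sylvester} {c : ℕ} (h : IsPConj x y)
    (hx : ∀ a ∈ Multiplicative.toAdd (content x), a < c) (M : ℕ) :
    x * ofList (List.replicate M c) ∼ₚ* y * ofList (List.replicate M c) := by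
  obtain ⟨u, v, rfl, rfl⟩ := h
  obtain ⟨lu, rfl⟩ := exists_ofList_eq u
  obtain ⟨lv, rfl⟩ := exists_ofList_eq v
  simp only [← ofList_append, content_ofList, toAdd_ofAdd, Multiset.mem_coe] at hx ⊢
  exact transGen_ofList_append_replicate (fun a ha => hx a (by simp [ha]))
    (fun a ha => hx a (by simp [ha])) M

theorem transGen_mul_ofList_replicate {x y : Sylvester} {c : ℕ} (h : x ∼ₚ* y)
    (hx : ∀ a ∈ Multiplicative.toAdd (content x), a < c) (M : ℕ) :
    x * ofList (List.replicate M c) ∼ₚ* y * ofList (List.replicate M c) := by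
  induction h with
  | single h => exact transGen_mul_ofList_replicate_of_isPConj h hx M
  | tail hxy h ih =>
    refine ih.trans (transGen_mul_ofList_replicate_of_isPConj h ?_ M)
    rwa [← map_eq_of_transGen_isPConj content hxy]

theorem transGen_ofList_of_perm {W W' : List ℕ} (h : W.Perm W') : ofList W ∼ₚ* ofList W' := by
  rcases eq_or_ne W [] with rfl | hW
  · rw [List.nil_perm.1 h]
    exact refl _
  obtain ⟨c, hcW, hc⟩ := List.exists_mem_forall_le_of_ne_nil hW
  obtain ⟨Z, hZ, hWZ⟩ := exists_perm_transGen_ofList_gather hc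
  obtain ⟨Z', hZ', hWZ'⟩ := exists_perm_transGen_ofList_gather fun a ha => hc a (h.mem_iff.2 ha)
  have hlt : Z.length < W.length := by
    rw [hZ.length_eq, List.length_filter_lt_length_iff_exists]
    exact ⟨c, hcW, by simp⟩
  have hZc : ∀ a ∈ Multiplicative.toAdd (content (ofList Z)), a < c := fun a ha => by
    simp only [content_ofList, toAdd_ofAdd, Multiset.mem_coe] at ha
    obtain ⟨haW, hac⟩ := List.mem_filter.1 (hZ.mem_iff.1 ha)
    exact (hc a haW).lt_of_ne (of_decide_eq_true hac)
  calc ofList W ∼ₚ* ofList (Z ++ List.replicate (W'.count c) c) := h.count_eq c ▸ hWZ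
    _ = ofList Z * ofList (List.replicate (W'.count c) c) := ofList_append _ _
    _ ∼ₚ* ofList Z' * ofList (List.replicate (W'.count c) c) :=
        transGen_mul_ofList_replicate
          (transGen_ofList_of_perm (hZ.trans ((h.filter _).trans hZ'.symm))) hZc _
    _ = ofList (Z' ++ List.replicate (W'.count c) c) := (ofList_append _ _).symm
    _ ∼ₚ* ofList W' := symm hWZ'
termination_by W.length

theorem transGen_iff_content_eq {x y : Sylvester} : x ∼ₚ* y ↔ content x = content y := by
  refine ⟨map_eq_of_transGen_isPConj content, fun h => ?_⟩
  obtain ⟨l, rfl⟩ := exists_ofList_eq x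
  obtain ⟨l', rfl⟩ := exists_ofList_eq y
  rw [content_ofList, content_ofList, Multiplicative.ofAdd.injective.eq_iff,
    Multiset.coe_eq_coe] at h
  exact transGen_ofList_of_perm h

theorem exists_mul_eq_mul_iff_content_eq {x y : Sylvester} :
    (∃ g h, x * g = g * y ∧ h * x = y * h) ↔ content x = content y :=
  ⟨fun ⟨_, _, hg, _⟩ => map_eq_of_mul_eq_mul content hg,
    fun h => exists_mul_eq_mul_of_transGen_isPConj (transGen_iff_content_eq.2 h)⟩

end Sylvester

theorem sylvester_oconj_iff_content :
    (∀ w w' : FreeMonoid ℕ,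
      ((∃ g h : (conGen SylvesterRel).Quotient,
          (conGen SylvesterRel).mk' w * g = g * (conGen SylvesterRel).mk' w' ∧
          h * (conGen SylvesterRel).mk' w = (conGen SylvesterRel).mk' w' * h) ↔
        ∀ a : ℕ, w.toList.count a = w'.toList.count a)) ∧
    (∀ x y : (conGen SylvesterRel).Quotient,
      (∃ g h, x * g = g * y ∧ h * x = y * h) ↔
        Relation.TransGen (fun x y => ∃ u v, x = u * v ∧ y = v * u) x y) := by
  refine ⟨fun w w' => ?_, fun x y => Sylvester.exists_mul_eq_mul_iff_content_eq.trans
    Sylvester.transGen_iff_content_eq.symm⟩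
  rw [Sylvester.exists_mul_eq_mul_iff_content_eq, ← Sylvester.ofList_toList w,
    ← Sylvester.ofList_toList w', Sylvester.content_ofList, Sylvester.content_ofList,
    Multiplicative.ofAdd.injective.eq_iff, Multiset.coe_eq_coe, List.perm_iff_count]
end

section
/- In the sylvester monoid, the defining relation cavb = acvb (for a ≤ b < c and any word v) holds; consequently for any letters a ≤ b < c and word v, the words cavb and acvb insert to the same binary search tree. -/
inductive BTree (α : Type*) where
  | leaf : BTree α
  | node : BTree α → α → BTree α → BTree α

variable {α : Type*}

/-- Insertion of a letter into a (right strict) binary search tree. -/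
def BTree.insert [LinearOrder α] (a : α) : BTree α → BTree α
  | .leaf => .node .leaf a .leaf
  | .node l x r =>
      if a ≤ x then .node (BTree.insert a l) x r else .node l x (BTree.insert a r)

/-- `bst w` inserts the letters of `w` from right to left into the empty tree. -/
def bst [LinearOrder α] (w : List α) : BTree α := w.foldr BTree.insert .leaf

/-- The list of labels of a tree. -/
def BTree.labels : BTree α → List α
  | .leaf => []
  | .node l x r => l.labels ++ [x] ++ r.labels

/-- Left-to-right postfix reading. -/
def BTree.lrp : BTree α → List α
  | .leaf => []
  | .node l x r => l.lrp ++ r.lrp ++ [x]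

/-- A labelled binary tree is a right strict binary search tree if each
node's label is ≥ all labels in its left subtree and < all labels in its
right subtree. -/
def BTree.IsRightStrictBST [LinearOrder α] : BTree α → Prop
  | .leaf => True
  | .node l x r =>
      (∀ y ∈ l.labels, y ≤ x) ∧ (∀ y ∈ r.labels, x < y) ∧
        l.IsRightStrictBST ∧ r.IsRightStrictBST

/-!
Inserting `a` and then `c` into a binary search tree `t` follows the same path for both letters
as long as they compare the same way with the node labels met. If `t` contains a label `b` with
`a ≤ b < c`, the paths must separate at some node, `a` going left and `c` going right, and there
the two insertions touch disjoint subtrees, so their order does not matter. In `bst (v ++ [b])`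
the letter `b` is a label, so `c :: a :: v ++ [b]` and `a :: c :: v ++ [b]` give the same tree.
-/

namespace BTree

variable [LinearOrder α]

lemma mem_labels_insert {a y : α} {t : BTree α} :
    y ∈ (t.insert a).labels ↔ y = a ∨ y ∈ t.labels := by
  induction t with
  | leaf => simp [BTree.insert, labels]
  | node l x r ihl ihr =>
    by_cases h : a ≤ x <;> simp [BTree.insert, h, labels, ihl, ihr] <;> tauto

lemma IsRightStrictBST.insert (a : α) {t : BTree α} (ht : t.IsRightStrictBST) :
    (t.insert a).IsRightStrictBST := by
  induction t with
  | leaf => simp [BTree.insert, labels, IsRightStrictBST]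
  | node l x r ihl ihr =>
    obtain ⟨hl, hr, hlBST, hrBST⟩ := ht
    by_cases h : a ≤ x
    · simp only [BTree.insert, if_pos h]
      refine ⟨fun y hy => ?_, hr, ihl hlBST, hrBST⟩
      rcases mem_labels_insert.1 hy with rfl | hy
      exacts [h, hl y hy]
    · simp only [BTree.insert, if_neg h]
      refine ⟨hl, fun y hy => ?_, hlBST, ihr hrBST⟩
      rcases mem_labels_insert.1 hy with rfl | hy
      exacts [lt_of_not_ge h, hr y hy]

lemma mem_labels_left_of_lt {l r : BTree α} {x y : α} (hr : ∀ z ∈ r.labels, x < z)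
    (hy : y ∈ (node l x r).labels) (hyx : y < x) : y ∈ l.labels := by
  simp only [labels, List.mem_append, List.mem_singleton] at hy
  rcases hy with (hy | rfl) | hy
  exacts [hy, absurd hyx (lt_irrefl _), absurd (hr y hy) (not_lt_of_gt hyx)]

lemma mem_labels_right_of_lt {l r : BTree α} {x y : α} (hl : ∀ z ∈ l.labels, z ≤ x)
    (hy : y ∈ (node l x r).labels) (hxy : x < y) : y ∈ r.labels := by
  simp only [labels, List.mem_append, List.mem_singleton] at hy
  rcases hy with (hy | rfl) | hy
  exacts [absurd (hl y hy) (not_le_of_gt hxy), absurd hxy (lt_irrefl _), hy]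

theorem insert_comm_of_le_of_lt {a b c : α} {t : BTree α} (ht : t.IsRightStrictBST)
    (hb : b ∈ t.labels) (hab : a ≤ b) (hbc : b < c) :
    (t.insert a).insert c = (t.insert c).insert a := by
  induction t with
  | leaf => simp [labels] at hb
  | node l x r ihl ihr =>
    obtain ⟨hl, hr, hlBST, hrBST⟩ := ht
    by_cases hax : a ≤ x
    · by_cases hcx : c ≤ x
      · have hbl := mem_labels_left_of_lt hr hb (hbc.trans_le hcx)
        simp [BTree.insert, hax, hcx, ihl hlBST hbl]
      · simp [BTree.insert, hax, hcx]
    · have hcx : ¬c ≤ x := fun h => hax ((hab.trans hbc.le).trans h)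
      have hbr := mem_labels_right_of_lt hl hb ((lt_of_not_ge hax).trans_le hab)
      simp [BTree.insert, hax, hcx, ihr hrBST hbr]

end BTree

lemma isRightStrictBST_bst [LinearOrder α] (w : List α) : (bst w).IsRightStrictBST := by
  induction w with
  | nil => trivial
  | cons x w ih => exact ih.insert x

lemma mem_labels_bst [LinearOrder α] {w : List α} {y : α} : y ∈ (bst w).labels ↔ y ∈ w := by
  induction w with
  | nil => simp [bst, BTree.labels]
  | cons x w ih => simp [bst, BTree.mem_labels_insert, ← ih]

theorem sylvester_relation_bst (a b c : ℕ) (hab : a ≤ b) (hbc : b < c) (v : List ℕ) :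
    (conGen SylvesterRel) (FreeMonoid.ofList (c :: a :: v ++ [b]))
      (FreeMonoid.ofList (a :: c :: v ++ [b])) ∧
    bst (c :: a :: v ++ [b]) = bst (a :: c :: v ++ [b]) :=
  ⟨ConGen.Rel.of _ _ ⟨a, b, c, FreeMonoid.ofList v, hab, hbc, rfl, rfl⟩,
    BTree.insert_comm_of_le_of_lt (isRightStrictBST_bst _) (mem_labels_bst.2 (by simp)) hab hbc⟩
end

section
/- For any right strict binary search tree T, inserting the letters of its left-to-right postfix reading LRP(T) from right to left recovers T; that is, BST(LRP(T)) = T. -/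
variable {α : Type*}

/-!
The last letter of `LRP(T)` is the root `x` of `T`, so it is inserted first. The letters of
the right subtree are all `> x` and the letters of the left subtree all `≤ x`, so afterwards
each of them is routed into the corresponding subtree of `x` without disturbing the other;
the two subtrees are therefore rebuilt as `BST(LRP(l))` and `BST(LRP(r))`, and induction
concludes.
-/

namespace BTree

theorem mem_lrp {T : BTree α} {y : α} : y ∈ T.lrp ↔ y ∈ T.labels := by
  induction T with
  | leaf => rfl
  | node l x r ihl ihr =>
    simp only [lrp, labels, List.mem_append, List.mem_singleton, ihl, ihr]
    tauto

variable [LinearOrder α]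

theorem foldr_insert_node_of_forall_le {w : List α} {x : α} (h : ∀ y ∈ w, y ≤ x)
    (l r : BTree α) : w.foldr insert (node l x r) = node (w.foldr insert l) x r := by
  induction w with
  | nil => rfl
  | cons a w ih =>
    rw [List.forall_mem_cons] at h
    simp only [List.foldr_cons, ih h.2, insert, if_pos h.1]

theorem foldr_insert_node_of_forall_lt {w : List α} {x : α} (h : ∀ y ∈ w, x < y)
    (l r : BTree α) : w.foldr insert (node l x r) = node l x (w.foldr insert r) := by
  induction w with
  | nil => rfl
  | cons a w ih =>
    rw [List.forall_mem_cons] at h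
    simp only [List.foldr_cons, ih h.2, insert, if_neg (not_le.mpr h.1)]

end BTree

theorem bst_lrp (T : BTree α) [LinearOrder α] (hT : T.IsRightStrictBST) :
    bst T.lrp = T := by
  induction T with
  | leaf => rfl
  | node l x r ihl ihr =>
    obtain ⟨hl, hr, hbl, hbr⟩ := hT
    calc bst (BTree.node l x r).lrp
        = l.lrp.foldr BTree.insert (r.lrp.foldr BTree.insert (.node .leaf x .leaf)) := by
          simp only [bst, BTree.lrp, List.foldr_append, List.foldr_cons, List.foldr_nil,
            BTree.insert]
      _ = .node (bst l.lrp) x (bst r.lrp) := by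
          rw [BTree.foldr_insert_node_of_forall_lt fun y hy => hr y (BTree.mem_lrp.mp hy),
            BTree.foldr_insert_node_of_forall_le fun y hy => hl y (BTree.mem_lrp.mp hy)]
          rfl
      _ = .node l x r := by rw [ihl hbl, ihr hbr]
end

section
/- A right strict binary search tree T is left full (every node has empty right subtree) if and only if its left-to-right postfix reading has the form 1^{k₁} 2^{k₂} ⋯ m^{k_m} (a weakly increasing word). Consequently, for each content there is exactly one left full binary search tree with that content. -/
variable {α : Type*}

/-- A tree is left full if every node has an empty right subtree. -/
def BTree.LeftFull : BTree α → Prop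
  | .leaf => True
  | .node l _ r => r = .leaf ∧ l.LeftFull

/-!
The in-order reading `labels` of a right strict BST is sorted, and for a left full tree it
coincides with `lrp`. Conversely, in `lrp` the labels of a right subtree are read before its
root, so if `lrp` is sorted they are `≤` the root, while the BST condition makes them `>` it:
every right subtree is empty. Uniqueness follows because a left full tree is determined by its
in-order reading, and the in-order reading of a BST is the sorted list of its content.
-/

namespace BTree

theorem labels_eq_nil_iff {T : BTree α} : T.labels = [] ↔ T = leaf := by
  cases T <;> simp [labels]

theorem lrp_perm_labels : ∀ T : BTree α, T.lrp.Perm T.labels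
  | leaf => .refl _
  | node l x r => by
    simp only [lrp, labels, List.append_assoc]
    exact l.lrp_perm_labels.append <|
      (r.lrp_perm_labels.append_right [x]).trans List.perm_append_comm

theorem LeftFull.lrp_eq_labels : ∀ {T : BTree α}, T.LeftFull → T.lrp = T.labels
  | leaf, _ => rfl
  | node _ _ _, ⟨rfl, hl⟩ => by simp [lrp, labels, hl.lrp_eq_labels]

theorem LeftFull.eq_of_labels_eq : ∀ {T T' : BTree α}, T.LeftFull → T'.LeftFull →
    T.labels = T'.labels → T = T'
  | leaf, leaf, _, _, _ => rfl
  | leaf, node _ _ _, _, _, h => by simp [labels] at h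
  | node _ _ _, leaf, _, _, h => by simp [labels] at h
  | node _ x _, node _ x' _, ⟨rfl, hl⟩, ⟨rfl, hl'⟩, h => by
    simp only [labels, List.append_nil] at h
    obtain ⟨hlabels, hx⟩ := List.append_inj' h rfl
    obtain rfl : x = x' := List.singleton_inj.mp hx
    rw [hl.eq_of_labels_eq hl' hlabels]

variable [LinearOrder α]

theorem IsRightStrictBST.labels_sorted : ∀ {T : BTree α}, T.IsRightStrictBST →
    T.labels.Pairwise (· ≤ ·)
  | leaf, _ => .nil
  | node _ x _, ⟨hlx, hxr, hl, hr⟩ => by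
    simp only [labels, List.pairwise_append, List.mem_append, List.mem_singleton,
      List.pairwise_singleton, true_and]
    refine ⟨⟨hl.labels_sorted, fun a ha b hb => hb ▸ hlx a ha⟩, hr.labels_sorted, ?_⟩
    rintro a (ha | rfl) b hb
    · exact (hlx a ha).trans (hxr b hb).le
    · exact (hxr b hb).le

theorem IsRightStrictBST.leftFull_of_lrp_sorted : ∀ {T : BTree α}, T.IsRightStrictBST →
    T.lrp.Pairwise (· ≤ ·) → T.LeftFull
  | leaf, _, _ => trivial
  | node _ x r, ⟨_, hxr, hl, _⟩, hs => by
    simp only [lrp, List.pairwise_append, List.mem_append, List.mem_singleton] at hs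
    obtain ⟨⟨hsl, -, -⟩, -, hle⟩ := hs
    have hr : r = leaf := labels_eq_nil_iff.mp <| List.eq_nil_iff_forall_not_mem.mpr
      fun y hy => (hxr y hy).not_ge <| hle y (.inr <| r.lrp_perm_labels.mem_iff.mpr hy) x rfl
    exact ⟨hr, hl.leftFull_of_lrp_sorted hsl⟩

end BTree

theorem leftFull_iff_lrp_sorted :
    (∀ T : BTree ℕ, T.IsRightStrictBST → (T.LeftFull ↔ T.lrp.Pairwise (· ≤ ·))) ∧
    (∀ T T' : BTree ℕ, T.IsRightStrictBST → T'.IsRightStrictBST →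
      T.LeftFull → T'.LeftFull →
      (T.labels : Multiset ℕ) = (T'.labels : Multiset ℕ) → T = T') := by
  refine ⟨fun T hT => ⟨fun hfull => ?_, hT.leftFull_of_lrp_sorted⟩, ?_⟩
  · rw [hfull.lrp_eq_labels]
    exact hT.labels_sorted
  · intro T T' hT hT' hfull hfull' hcontent
    exact hfull.eq_of_labels_eq hfull' <|
      (Multiset.coe_eq_coe.mp hcontent).eq_of_pairwise' hT.labels_sorted hT'.labels_sorted
end
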